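/- arXiv:2205.08951 — 2 statements merged into one kernel-verified Lean document; each statement's English description precedes it below -/
import Mathlib

section
/- Assume the reduced matrices have projection form: Â = (WᵀV)⁻¹WᵀAV, N̂_i = (WᵀV)⁻¹WᵀN_iV, X̂₀ = (WᵀV)⁻¹WᵀX₀, Ĉ = CV, where V, W ∈ ℝ^{n×n̂} and WᵀV is invertible, and suppose that V F̂(t) = F̃(t) and W(VᵀW)⁻¹ Ĝ(t) = G̃(t) for every t ∈ [0,T]. Then the four optimality conditions hold exactly: (a) Ĉ P̂(T) = C P̃(T); (b) Q̂(T) X̂₀ = Q̃(T)ᵀ X₀; (c) ∫₀ᵀ Q̂(T−t) F̂(t) dt = ∫₀ᵀ Q̃(T−t)ᵀ F̃(t) dt; (d) for every i = 1,…,q, ∫₀ᵀ Q̂(T−t) (Σ_{j=1}^q N̂_j k_{ij}) F̂(t) dt = ∫₀ᵀ Q̃(T−t)ᵀ (Σ_{j=1}^q N_j k_{ij}) F̃(t) dt. -/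
open Matrix MeasureTheory Filter
open scoped Kronecker Topology

/-- Column-stacking vectorization of a matrix: `vecM X (j, i) = X i j`. -/
def vecM {a b : Type*} (X : Matrix a b ℝ) : b × a → ℝ := fun p => X p.2 p.1

/-- Inverse of column-stacking vectorization. -/
def unvecM {a b : Type*} (v : b × a → ℝ) : Matrix a b ℝ := Matrix.of fun i j => v (j, i)

/-- (Mixed) Lyapunov-type operator `X ↦ A₁ X + X A₂ᵀ + ∑ᵢⱼ kᵢⱼ • N₁ᵢ X N₂ⱼᵀ`. -/
def lyapM {a b : Type*} [Fintype a] [Fintype b] {q : ℕ}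
    (A₁ : Matrix a a ℝ) (A₂ : Matrix b b ℝ)
    (N₁ : Fin q → Matrix a a ℝ) (N₂ : Fin q → Matrix b b ℝ)
    (K : Matrix (Fin q) (Fin q) ℝ) (X : Matrix a b ℝ) : Matrix a b ℝ :=
  A₁ * X + X * A₂ᵀ + ∑ i, ∑ j, K i j • (N₁ i * X * (N₂ j)ᵀ)

/-- Frobenius adjoint of `lyapM`: `X ↦ A₁ᵀ X + X A₂ + ∑ᵢⱼ kᵢⱼ • N₁ᵢᵀ X N₂ⱼ`. -/
def lyapAdjM {a b : Type*} [Fintype a] [Fintype b] {q : ℕ}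
    (A₁ : Matrix a a ℝ) (A₂ : Matrix b b ℝ)
    (N₁ : Fin q → Matrix a a ℝ) (N₂ : Fin q → Matrix b b ℝ)
    (K : Matrix (Fin q) (Fin q) ℝ) (X : Matrix a b ℝ) : Matrix a b ℝ :=
  A₁ᵀ * X + X * A₂ + ∑ i, ∑ j, K i j • ((N₁ i)ᵀ * X * N₂ j)

/-- Kronecker matrix `𝒦 = I ⊗ A₁ + A₂ ⊗ I + ∑ᵢⱼ kᵢⱼ • (N₂ᵢ ⊗ N₁ⱼ)` associated to `lyapM`. -/
noncomputable def kronM {a b : Type*} [Fintype a] [Fintype b] [DecidableEq a] [DecidableEq b] {q : ℕ}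
    (A₁ : Matrix a a ℝ) (A₂ : Matrix b b ℝ)
    (N₁ : Fin q → Matrix a a ℝ) (N₂ : Fin q → Matrix b b ℝ)
    (K : Matrix (Fin q) (Fin q) ℝ) : Matrix (b × a) (b × a) ℝ :=
  (1 : Matrix b b ℝ) ⊗ₖ A₁ + A₂ ⊗ₖ (1 : Matrix a a ℝ) + ∑ i, ∑ j, K i j • (N₂ i ⊗ₖ N₁ j)

/-- `F` solves the matrix ODE `F' = L (F t)` at every `t ∈ [0,T]` (entrywise). -/
def solvesODE {a b : Type*} (L : Matrix a b ℝ → Matrix a b ℝ)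
    (F : ℝ → Matrix a b ℝ) (T : ℝ) : Prop :=
  ∀ t ∈ Set.Icc (0:ℝ) T, ∀ i j, HasDerivAt (fun s => F s i j) (L (F t) i j) t

/-- Entrywise integral `∫₀ᵀ F(t) dt`. -/
noncomputable def intM {a b : Type*} (F : ℝ → Matrix a b ℝ) (T : ℝ) : Matrix a b ℝ :=
  Matrix.of fun i j => ∫ t in (0:ℝ)..T, F t i j

/-- Explicit solution of a vectorized linear matrix ODE via the matrix exponential. -/
noncomputable def expSolM {a b : Type*} [Fintype a] [Fintype b] [DecidableEq a] [DecidableEq b]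
    (Kmat : Matrix (b × a) (b × a) ℝ) (F₀ : Matrix a b ℝ) (t : ℝ) : Matrix a b ℝ :=
  unvecM (NormedSpace.exp (t • Kmat) *ᵥ vecM F₀)

/-! With `P = (WᵀV)⁻¹Wᵀ` we have `PV = 1`, `N̂ᵢ = PNᵢV` and `X̂₀ = PX₀`. Because `K` is symmetric,
`Ĝᵀ` solves the same linear ODE as `Ĝ` from the same symmetric initial value `ĈᵀĈ`, so `Ĝ`, and
with it every `Q̂(c)`, is symmetric by uniqueness of solutions. Integrating the two hypotheses gives
`P̃ = V P̂` and `Q̃ = W(VᵀW)⁻¹Q̂`, hence `Q̃ᵀ = Q̂P`; each optimality condition then follows by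
inserting `PV = 1` or `PNV = N̂` between the factors. -/

theorem Matrix.transpose_mul_nonsing_inv_mul_of_isSymm {R n r : Type*} [CommRing R]
    [Fintype n] [Fintype r] [DecidableEq r] (V W : Matrix n r R) {Q : Matrix r r R}
    (hQ : Q.IsSymm) :
    (W * (Vᵀ * W)⁻¹ * Q)ᵀ = Q * ((Wᵀ * V)⁻¹ * Wᵀ) := by
  rw [transpose_mul, hQ.eq, transpose_mul, transpose_nonsing_inv, transpose_mul,
    transpose_transpose]

section intM

variable {a b : Type*} {F G : ℝ → Matrix a b ℝ} {T : ℝ}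

theorem intM_congr (hT : 0 ≤ T) (h : Set.EqOn F G (Set.Icc 0 T)) : intM F T = intM G T := by
  ext i j
  refine intervalIntegral.integral_congr fun t ht => ?_
  rw [Set.uIcc_of_le hT] at ht
  rw [h ht]

theorem transpose_intM : (intM F T)ᵀ = intM (fun t => (F t)ᵀ) T := rfl

theorem isSymm_intM {F : ℝ → Matrix a a ℝ} (hT : 0 ≤ T) (h : ∀ t ∈ Set.Icc 0 T, (F t).IsSymm) :
    (intM F T).IsSymm :=
  (transpose_intM).trans (intM_congr hT fun t ht => (h t ht).eq)

theorem intM_mul_left {c : Type*} [Fintype a] (M : Matrix c a ℝ)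
    (hF : ∀ i j, IntervalIntegrable (fun t => F t i j) volume 0 T) :
    intM (fun t => M * F t) T = M * intM F T := by
  ext i j
  simp only [intM, of_apply, mul_apply]
  rw [intervalIntegral.integral_finsetSum fun k _ => (hF k j).const_mul (M i k)]
  simp only [intervalIntegral.integral_const_mul]

end intM

theorem isLinearMap_lyapAdjM {a b : Type*} [Fintype a] [Fintype b] {q : ℕ}
    (A₁ : Matrix a a ℝ) (A₂ : Matrix b b ℝ) (N₁ : Fin q → Matrix a a ℝ)
    (N₂ : Fin q → Matrix b b ℝ) (K : Matrix (Fin q) (Fin q) ℝ) :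
    IsLinearMap ℝ (lyapAdjM A₁ A₂ N₁ N₂ K) where
  map_add X Y := by
    simp only [lyapAdjM, Matrix.mul_add, Matrix.add_mul, smul_add, Finset.sum_add_distrib]
    abel
  map_smul c X := by
    simp only [lyapAdjM, Matrix.mul_smul, Matrix.smul_mul, smul_add, Finset.smul_sum,
      smul_comm c]

theorem lyapAdjM_transpose {a : Type*} [Fintype a] {q : ℕ} (A : Matrix a a ℝ)
    (N : Fin q → Matrix a a ℝ) {K : Matrix (Fin q) (Fin q) ℝ} (hK : K.IsSymm)
    (X : Matrix a a ℝ) :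
    lyapAdjM A A N N K Xᵀ = (lyapAdjM A A N N K X)ᵀ := by
  simp only [lyapAdjM, transpose_add, transpose_mul, transpose_sum, transpose_smul,
    transpose_transpose, Matrix.mul_assoc]
  rw [add_comm (Aᵀ * Xᵀ), Finset.sum_comm]
  simp only [hK.apply]

namespace solvesODE

variable {a b : Type*} {L : Matrix a b ℝ → Matrix a b ℝ} {F G : ℝ → Matrix a b ℝ} {T : ℝ}

theorem mono (h : solvesODE L F T) {c : ℝ} (hc : c ≤ T) : solvesODE L F c :=
  fun t ht => h t ⟨ht.1, ht.2.trans hc⟩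

theorem intervalIntegrable (h : solvesODE L F T) (hT : 0 ≤ T) (i : a) (j : b) :
    IntervalIntegrable (fun t => F t i j) volume 0 T :=
  ContinuousOn.intervalIntegrable <| by
    rw [Set.uIcc_of_le hT]
    exact fun t ht => (h t ht i j).continuousAt.continuousWithinAt

theorem intM_eq_mul {c : Type*} [Fintype a] {M : Matrix c a ℝ} {G : ℝ → Matrix c b ℝ}
    (h : solvesODE L F T) (hT : 0 ≤ T) (hG : ∀ t ∈ Set.Icc 0 T, M * F t = G t) :
    intM G T = M * intM F T := by
  rw [← intM_mul_left M (h.intervalIntegrable hT)]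
  exact intM_congr hT fun t ht => (hG t ht).symm

theorem hasDerivAt [Fintype a] [Fintype b] (h : solvesODE L F T) {t : ℝ}
    (ht : t ∈ Set.Icc 0 T) : HasDerivAt F (L (F t)) t := by
  have hpi : HasDerivAt (fun s => (F s : a → b → ℝ)) (L (F t) : a → b → ℝ) t :=
    hasDerivAt_pi.2 fun i => hasDerivAt_pi.2 fun j => h t ht i j
  exact hpi

attribute [local instance] Matrix.normedAddCommGroup Matrix.normedSpace in
theorem eqOn_of_isLinearMap [Fintype a] [Fintype b] (hL : IsLinearMap ℝ L)
    (hF : solvesODE L F T) (hG : solvesODE L G T) (h0 : F 0 = G 0) :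
    Set.EqOn F G (Set.Icc 0 T) :=
  ODE_solution_unique (v := fun _ => L)
    (fun _ => (IsLinearMap.mk' L hL).toContinuousLinearMap.lipschitz)
    (fun _ ht => (hasDerivAt hF ht).continuousAt.continuousWithinAt)
    (fun _ ht => (hasDerivAt hF (Set.Ico_subset_Icc_self ht)).hasDerivWithinAt)
    (fun _ ht => (hasDerivAt hG ht).continuousAt.continuousWithinAt)
    (fun _ ht => (hasDerivAt hG (Set.Ico_subset_Icc_self ht)).hasDerivWithinAt) h0

variable [Fintype a] {q : ℕ} {A : Matrix a a ℝ} {N : Fin q → Matrix a a ℝ}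
  {K : Matrix (Fin q) (Fin q) ℝ} {G : ℝ → Matrix a a ℝ}

theorem transpose_lyapAdjM (hK : K.IsSymm) (h : solvesODE (lyapAdjM A A N N K) G T) :
    solvesODE (lyapAdjM A A N N K) (fun t => (G t)ᵀ) T := fun t ht i j => by
  rw [lyapAdjM_transpose A N hK]
  exact h t ht j i

theorem isSymm_lyapAdjM (hK : K.IsSymm) (h : solvesODE (lyapAdjM A A N N K) G T)
    (h0 : (G 0).IsSymm) : ∀ t ∈ Set.Icc 0 T, (G t).IsSymm :=
  fun _ ht => eqOn_of_isLinearMap (isLinearMap_lyapAdjM A A N N K)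
    (transpose_lyapAdjM hK h) h h0 ht

end solvesODE

theorem stmt_7_general {n nh m p q : ℕ} (T : ℝ) (hT : 0 < T)
    (N : Fin q → Matrix (Fin n) (Fin n) ℝ)
    (K : Matrix (Fin q) (Fin q) ℝ) (hK : K.IsSymm)
    (X₀ : Matrix (Fin n) (Fin m) ℝ) (C : Matrix (Fin p) (Fin n) ℝ)
    (V W : Matrix (Fin n) (Fin nh) ℝ) (hWV : IsUnit (Wᵀ * V))
    (Ahat : Matrix (Fin nh) (Fin nh) ℝ) (Nhat : Fin q → Matrix (Fin nh) (Fin nh) ℝ)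
    (X0hat : Matrix (Fin nh) (Fin m) ℝ) (Chat : Matrix (Fin p) (Fin nh) ℝ)
    (hNhat : ∀ i, Nhat i = (Wᵀ * V)⁻¹ * Wᵀ * N i * V)
    (hX0hat : X0hat = (Wᵀ * V)⁻¹ * Wᵀ * X₀)
    (hChat : Chat = C * V)
    (Fhat : ℝ → Matrix (Fin nh) (Fin nh) ℝ)
    (hFhat : solvesODE (lyapM Ahat Ahat Nhat Nhat K) Fhat T)
    (Ftil : ℝ → Matrix (Fin n) (Fin nh) ℝ)
    (Ghat : ℝ → Matrix (Fin nh) (Fin nh) ℝ)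
    (hGhat : solvesODE (lyapAdjM Ahat Ahat Nhat Nhat K) Ghat T)
    (hGhat0 : Ghat 0 = Chatᵀ * Chat)
    (Gtil : ℝ → Matrix (Fin n) (Fin nh) ℝ)
    (hVF : ∀ t ∈ Set.Icc (0:ℝ) T, V * Fhat t = Ftil t)
    (hWG : ∀ t ∈ Set.Icc (0:ℝ) T, W * (Vᵀ * W)⁻¹ * Ghat t = Gtil t) :
    Chat * intM Fhat T = C * intM Ftil T
    ∧ intM Ghat T * X0hat = (intM Gtil T)ᵀ * X₀
    ∧ intM (fun t => intM Ghat (T - t) * Fhat t) T =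
        intM (fun t => (intM Gtil (T - t))ᵀ * Ftil t) T
    ∧ ∀ i : Fin q,
        intM (fun t => intM Ghat (T - t) * (∑ j, K i j • Nhat j) * Fhat t) T =
          intM (fun t => (intM Gtil (T - t))ᵀ * (∑ j, K i j • N j) * Ftil t) T := by
  set P := (Wᵀ * V)⁻¹ * Wᵀ
  have hPV : P * V = 1 := by
    rw [Matrix.mul_assoc, nonsing_inv_mul _ ((isUnit_iff_isUnit_det _).mp hWV)]
  have hGsym := hGhat.isSymm_lyapAdjM hK
    (by rw [hGhat0, IsSymm, transpose_mul, transpose_transpose])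
  have hF : intM Ftil T = V * intM Fhat T := hFhat.intM_eq_mul hT.le hVF
  have hG : ∀ c ∈ Set.Icc 0 T, (intM Gtil c)ᵀ = intM Ghat c * P := fun c hc => by
    rw [(hGhat.mono hc.2).intM_eq_mul hc.1 fun t ht => hWG t ⟨ht.1, ht.2.trans hc.2⟩,
      transpose_mul_nonsing_inv_mul_of_isSymm V W
        (isSymm_intM hc.1 fun t ht => hGsym t ⟨ht.1, ht.2.trans hc.2⟩)]
  have hconv : ∀ M : Matrix (Fin n) (Fin n) ℝ,
      intM (fun t => intM Ghat (T - t) * (P * M * V) * Fhat t) T =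
        intM (fun t => (intM Gtil (T - t))ᵀ * M * Ftil t) T := fun M =>
    intM_congr hT.le fun t ht => by
      rw [hG (T - t) ⟨by linarith [ht.2], by linarith [ht.1]⟩, ← hVF t ht]
      simp only [Matrix.mul_assoc]
  refine ⟨?_, ?_, ?_, fun i => ?_⟩
  · rw [hChat, hF, Matrix.mul_assoc]
  · rw [hG T ⟨hT.le, le_rfl⟩, Matrix.mul_assoc, hX0hat]
  · simpa only [Matrix.mul_one, hPV] using hconv 1
  · convert hconv (∑ j, K i j • N j) using 4
    simp only [hNhat, Matrix.mul_sum, Matrix.sum_mul, Matrix.mul_smul, Matrix.smul_mul]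

/-- Lemma 3.2, exact version: projection-form reduced matrices with
`V F̂ = F̃` and `W (VᵀW)⁻¹ Ĝ = G̃` pointwise on `[0,T]` satisfy the optimality
conditions (a)–(d) of Theorem 3.1 exactly. -/
theorem stmt_7 {n nh m p q : ℕ} (T : ℝ) (hT : 0 < T)
    (A : Matrix (Fin n) (Fin n) ℝ) (N : Fin q → Matrix (Fin n) (Fin n) ℝ)
    (K : Matrix (Fin q) (Fin q) ℝ) (hK : K.IsSymm)
    (X₀ : Matrix (Fin n) (Fin m) ℝ) (C : Matrix (Fin p) (Fin n) ℝ)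
    (V W : Matrix (Fin n) (Fin nh) ℝ) (hWV : IsUnit (Wᵀ * V))
    (Ahat : Matrix (Fin nh) (Fin nh) ℝ) (Nhat : Fin q → Matrix (Fin nh) (Fin nh) ℝ)
    (X0hat : Matrix (Fin nh) (Fin m) ℝ) (Chat : Matrix (Fin p) (Fin nh) ℝ)
    (hAhat : Ahat = (Wᵀ * V)⁻¹ * Wᵀ * A * V)
    (hNhat : ∀ i, Nhat i = (Wᵀ * V)⁻¹ * Wᵀ * N i * V)
    (hX0hat : X0hat = (Wᵀ * V)⁻¹ * Wᵀ * X₀)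
    (hChat : Chat = C * V)
    (Fhat : ℝ → Matrix (Fin nh) (Fin nh) ℝ)
    (hFhat : solvesODE (lyapM Ahat Ahat Nhat Nhat K) Fhat T)
    (hFhat0 : Fhat 0 = X0hat * X0hatᵀ)
    (Ftil : ℝ → Matrix (Fin n) (Fin nh) ℝ)
    (hFtil : solvesODE (lyapM A Ahat N Nhat K) Ftil T)
    (hFtil0 : Ftil 0 = X₀ * X0hatᵀ)
    (Ghat : ℝ → Matrix (Fin nh) (Fin nh) ℝ)
    (hGhat : solvesODE (lyapAdjM Ahat Ahat Nhat Nhat K) Ghat T)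
    (hGhat0 : Ghat 0 = Chatᵀ * Chat)
    (Gtil : ℝ → Matrix (Fin n) (Fin nh) ℝ)
    (hGtil : solvesODE (lyapAdjM A Ahat N Nhat K) Gtil T)
    (hGtil0 : Gtil 0 = Cᵀ * Chat)
    (hVF : ∀ t ∈ Set.Icc (0:ℝ) T, V * Fhat t = Ftil t)
    (hWG : ∀ t ∈ Set.Icc (0:ℝ) T, W * (Vᵀ * W)⁻¹ * Ghat t = Gtil t) :
    Chat * intM Fhat T = C * intM Ftil T
    ∧ intM Ghat T * X0hat = (intM Gtil T)ᵀ * X₀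
    ∧ intM (fun t => intM Ghat (T - t) * Fhat t) T =
        intM (fun t => (intM Gtil (T - t))ᵀ * Ftil t) T
    ∧ ∀ i : Fin q,
        intM (fun t => intM Ghat (T - t) * (∑ j, K i j • Nhat j) * Fhat t) T =
          intM (fun t => (intM Gtil (T - t))ᵀ * (∑ j, K i j • N j) * Ftil t) T :=
  stmt_7_general T hT N K hK X₀ C V W hWV Ahat Nhat X0hat Chat hNhat hX0hat hChat Fhat hFhat Ftil
    Ghat hGhat hGhat0 Gtil hVF hWG
end

section
/- Assume K_M is positive semidefinite. Let P(T) = 𝒯_P Σ_P 𝒯_Pᵀ and Q(T) = 𝒯_Q Σ_Q 𝒯_Qᵀ with 𝒯_P, 𝒯_Q ∈ ℝ^{n×n} invertible and Σ_P, Σ_Q diagonal; partition 𝒯_P = [V_P, 𝒯_{P,2}] and 𝒯_Q = [W_Q, 𝒯_{Q,2}] with V_P, W_Q ∈ ℝ^{n×n̂}, and Σ_P = diag(Σ_{P,1}, Σ_{P,2}), Σ_Q = diag(Σ_{Q,1}, Σ_{Q,2}) with Σ_{P,2}, Σ_{Q,2} ∈ ℝ^{(n−n̂)×(n−n̂)}.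 Suppose V = P̃(T) R_V and W = Q̃(T) R_W for some matrices R_V, R_W ∈ ℝ^{n̂×n̂}. Then for every t ∈ [0,T] there exist matrices M_{F̃}(t), M_{P̃} ∈ ℝ^{n̂×n̂} and M_{F̃,2}(t), M_{P̃,2} ∈ ℝ^{(n−n̂)×n̂} such that F̃(t) = V_P M_{F̃}(t) + 𝒯_{P,2} Σ_{P,2} M_{F̃,2}(t) and V = V_P M_{P̃} + 𝒯_{P,2} Σ_{P,2} M_{P̃,2}; and there exist M_{G̃}(t), M_{Q̃} ∈ ℝ^{n̂×n̂} and M_{G̃,2}(t), M_{Q̃,2} ∈ ℝ^{(n−n̂)×n̂} such that G̃(t) = W_Q M_{G̃}(t) + 𝒯_{Q,2} Σ_{Q,2} M_{G̃,2}(t) and W = W_Q M_{Q̃} + 𝒯_{Q,2} Σ_{Q,2} M_{Q̃,2}. -/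
open Matrix MeasureTheory Filter
open scoped Kronecker Topology

/-- The embedding of the trailing `n - nh` indices into `Fin n`. -/
def tailEmb {n nh : ℕ} (h : nh ≤ n) : Fin (n - nh) → Fin n :=
  fun j => Fin.cast (Nat.sub_add_cancel h) (j.addNat nh)

/-!
Fix a trailing index `j` with `(Σ_P)_jj = 0` and let `v` be the `j`-th row of `𝒯_P⁻¹`; then
`vᵀ P(T) = (Σ_P)_jj (𝒯_P)ᵀ_j = 0`. Let `F̂` solve the reduced equation `F̂' = L̂(F̂)`,
`F̂(0) = X̂₀ X̂₀ᵀ`. The block matrix `Z = [[F, F̃], [F̃ᵀ, F̂]]` solves the Lyapunov equation with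
block-diagonal coefficients, starting from `[X₀; X̂₀] [X₀; X̂₀]ᵀ ⪰ 0`, and for `K_M ⪰ 0` this
equation preserves positive semidefiniteness. Hence `t ↦ vᵀ F(t) v` is nonnegative with zero
integral `vᵀ P(T) v`, so it vanishes, and then `Z(t) ⪰ 0` forces `F̃(t)ᵀ v = 0`. So the `j`-th
rows of `𝒯_P⁻¹ F̃(t)` and of `𝒯_P⁻¹ P̃(T) R_V` vanish, which is the claimed decomposition. `G̃`
and `W` are handled by the same argument for the transposed coefficients.
-/

open Set

section Lyapunov

variable {a b : Type*} [Fintype a] [Fintype b] {q : ℕ}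

lemma lyapM_transpose (A₁ : Matrix a a ℝ) (A₂ : Matrix b b ℝ)
    (N₁ : Fin q → Matrix a a ℝ) (N₂ : Fin q → Matrix b b ℝ)
    (K : Matrix (Fin q) (Fin q) ℝ) (X : Matrix a b ℝ) :
    (lyapM A₁ A₂ N₁ N₂ K X)ᵀ = lyapM A₂ A₁ N₂ N₁ Kᵀ Xᵀ := by
  simp only [lyapM, transpose_add, transpose_mul, transpose_smul, transpose_sum,
    transpose_transpose, Matrix.mul_assoc, transpose_apply]
  rw [Finset.sum_comm]
  abel

lemma lyapAdjM_eq_lyapM_transpose (A₁ : Matrix a a ℝ) (A₂ : Matrix b b ℝ)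
    (N₁ : Fin q → Matrix a a ℝ) (N₂ : Fin q → Matrix b b ℝ) (K : Matrix (Fin q) (Fin q) ℝ) :
    lyapAdjM A₁ A₂ N₁ N₂ K = lyapM A₁ᵀ A₂ᵀ (fun i => (N₁ i)ᵀ) (fun i => (N₂ i)ᵀ) K := by
  funext X
  simp [lyapAdjM, lyapM]

def lyapLinearMap (A₁ : Matrix a a ℝ) (A₂ : Matrix b b ℝ)
    (N₁ : Fin q → Matrix a a ℝ) (N₂ : Fin q → Matrix b b ℝ) (K : Matrix (Fin q) (Fin q) ℝ) :
    Matrix a b ℝ →ₗ[ℝ] Matrix a b ℝ where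
  toFun := lyapM A₁ A₂ N₁ N₂ K
  map_add' X Y := by
    simp only [lyapM, Matrix.mul_add, Matrix.add_mul, smul_add, Finset.sum_add_distrib]
    abel
  map_smul' c X := by
    simp only [lyapM, Matrix.mul_smul, Matrix.smul_mul, smul_add, Finset.smul_sum, smul_comm c,
      RingHom.id_apply]

lemma lyapLinearMap_apply (A₁ : Matrix a a ℝ) (A₂ : Matrix b b ℝ)
    (N₁ : Fin q → Matrix a a ℝ) (N₂ : Fin q → Matrix b b ℝ) (K : Matrix (Fin q) (Fin q) ℝ)
    (X : Matrix a b ℝ) : lyapLinearMap A₁ A₂ N₁ N₂ K X = lyapM A₁ A₂ N₁ N₂ K X := rfl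

lemma lyapM_fromBlocks (A : Matrix a a ℝ) (Ah : Matrix b b ℝ)
    (N : Fin q → Matrix a a ℝ) (Nh : Fin q → Matrix b b ℝ) (K : Matrix (Fin q) (Fin q) ℝ)
    (W : Matrix a a ℝ) (X : Matrix a b ℝ) (Y : Matrix b a ℝ) (U : Matrix b b ℝ) :
    lyapM (fromBlocks A 0 0 Ah) (fromBlocks A 0 0 Ah)
      (fun i => fromBlocks (N i) 0 0 (Nh i)) (fun i => fromBlocks (N i) 0 0 (Nh i))
      K (fromBlocks W X Y U)
    = fromBlocks (lyapM A A N N K W) (lyapM A Ah N Nh K X)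
        (lyapM Ah A Nh N K Y) (lyapM Ah Ah Nh Nh K U) := by
  simp only [lyapM, fromBlocks_transpose, transpose_zero, fromBlocks_multiply, Matrix.mul_zero,
    Matrix.zero_mul, add_zero, zero_add, fromBlocks_smul, fromBlocks_add]
  ext (i | i) (j | j) <;> simp [Matrix.sum_apply]

end Lyapunov

section Positivity

variable {ι : Type*} [Fintype ι] {q : ℕ}

lemma posSemidef_sum_smul_mul_mul_transpose {K : Matrix (Fin q) (Fin q) ℝ} (hK : K.PosSemidef)
    (N : Fin q → Matrix ι ι ℝ) {M : Matrix ι ι ℝ} (hM : M.PosSemidef) :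
    (∑ i, ∑ j, K i j • (N i * M * (N j)ᵀ)).PosSemidef := by
  let 𝒩 : Matrix ι (Fin q × ι) ℝ := of fun x p => N p.1 x p.2
  have h : ∑ i, ∑ j, K i j • (N i * M * (N j)ᵀ) = 𝒩 * (K ⊗ₖ M) * 𝒩ᴴ := by
    ext x y
    simp only [Matrix.sum_apply, Matrix.smul_apply, mul_apply, transpose_apply, Finset.sum_mul,
      smul_eq_mul, conjTranspose_eq_transpose_of_trivial, of_apply, kroneckerMap_apply,
      Fintype.sum_prod_type, 𝒩]
    rw [Finset.sum_comm]
    refine Finset.sum_congr rfl fun b _ => ?_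
    simp_rw [Finset.mul_sum]
    rw [Finset.sum_comm]
    refine Finset.sum_congr rfl fun j _ => Finset.sum_congr rfl fun a _ =>
      Finset.sum_congr rfl fun i _ => by ring
  rw [h]
  exact (hK.kronecker hM).mul_mul_conjTranspose_same 𝒩

lemma dotProduct_lyapM_mulVec_nonneg (A : Matrix ι ι ℝ) (N : Fin q → Matrix ι ι ℝ)
    {K : Matrix (Fin q) (Fin q) ℝ} (hK : K.PosSemidef) {M : Matrix ι ι ℝ} (hM : M.PosSemidef)
    {x : ι → ℝ} (hMx : M *ᵥ x = 0) :
    0 ≤ x ⬝ᵥ lyapM A A N N K M *ᵥ x := by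
  have hxM : x ᵥ* M = 0 := by
    rw [← mulVec_transpose, ← conjTranspose_eq_transpose_of_trivial, hM.1, hMx]
  have hnoise := (posSemidef_sum_smul_mul_mul_transpose hK N hM).dotProduct_mulVec_nonneg x
  rw [star_trivial] at hnoise
  simpa only [lyapM, add_mulVec, dotProduct_add, ← mulVec_mulVec, hMx, mulVec_zero,
    dotProduct_zero, dotProduct_mulVec x M, hxM, zero_dotProduct, zero_add] using hnoise

lemma isCompact_dotProduct_self_eq_one : IsCompact {x : ι → ℝ | x ⬝ᵥ x = 1} := by
  refine Metric.isCompact_of_isClosed_isBounded (isClosed_eq (by fun_prop) continuous_const)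
    ((Metric.isBounded_closedBall (x := 0) (r := 1)).subset ?_)
  intro x (hx : x ⬝ᵥ x = 1)
  rw [mem_closedBall_zero_iff, pi_norm_le_iff_of_nonneg zero_le_one]
  intro i
  rw [Real.norm_eq_abs, abs_le_one_iff_mul_self_le_one, ← hx]
  exact Finset.single_le_sum (f := fun j => x j * x j) (fun j _ => mul_self_nonneg (x j))
    (Finset.mem_univ i)

lemma posSemidef_of_dotProduct_mulVec_nonneg_of_unit {M : Matrix ι ι ℝ} (hM : M.IsHermitian)
    (h : ∀ x : ι → ℝ, x ⬝ᵥ x = 1 → 0 ≤ x ⬝ᵥ M *ᵥ x) : M.PosSemidef := by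
  refine .of_dotProduct_mulVec_nonneg hM fun x => ?_
  rw [star_trivial]
  rcases eq_or_ne x 0 with rfl | hx
  · simp
  have hpos : 0 < x ⬝ᵥ x :=
    lt_of_le_of_ne (by simpa using dotProduct_star_self_nonneg x)
      (Ne.symm (dotProduct_self_eq_zero.not.mpr hx))
  set r := Real.sqrt (x ⬝ᵥ x)
  have hr : 0 < r := Real.sqrt_pos.mpr hpos
  have hrr : r * r = x ⬝ᵥ x := Real.mul_self_sqrt hpos.le
  have hy := h (r⁻¹ • x) (by
    rw [smul_dotProduct, dotProduct_smul, smul_smul, ← hrr, smul_eq_mul]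
    field_simp)
  rw [mulVec_smul, smul_dotProduct, dotProduct_smul, smul_smul, smul_eq_mul] at hy
  exact nonneg_of_mul_nonneg_right hy (by positivity)

end Positivity

section ODE

open intervalIntegral

lemma exists_forall_hasDerivAt_clm {E : Type*} [NormedAddCommGroup E] [NormedSpace ℝ E]
    [CompleteSpace E] (L : E →L[ℝ] E) (x₀ : E) :
    ∃ X : ℝ → E, X 0 = x₀ ∧ ∀ t, HasDerivAt X (L (X t)) t := by
  refine ⟨fun t => NormedSpace.exp (t • L) x₀, by simp, fun t => ?_⟩
  simpa using (hasDerivAt_exp_smul_const' L t).clm_apply (hasDerivAt_const t x₀)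

lemma exists_solvesODE_lyapM {a b : Type*} [Fintype a] [Fintype b] {q : ℕ}
    (A₁ : Matrix a a ℝ) (A₂ : Matrix b b ℝ) (N₁ : Fin q → Matrix a a ℝ)
    (N₂ : Fin q → Matrix b b ℝ) (K : Matrix (Fin q) (Fin q) ℝ) (X₀ : Matrix a b ℝ) (T : ℝ) :
    ∃ X : ℝ → Matrix a b ℝ, X 0 = X₀ ∧ solvesODE (lyapM A₁ A₂ N₁ N₂ K) X T := by
  -- `Matrix a b ℝ` has no global norm, so the flow is built on the function space `a → b → ℝ`.
  let L : (a → b → ℝ) →ₗ[ℝ] (a → b → ℝ) := lyapLinearMap A₁ A₂ N₁ N₂ K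
  obtain ⟨X, hX0, hX⟩ := exists_forall_hasDerivAt_clm L.toContinuousLinearMap X₀
  exact ⟨X, hX0, fun t _ i j => hasDerivAt_pi.1 (hasDerivAt_pi.1 (hX t) i) j⟩

variable {a b : Type*} {L : Matrix a b ℝ → Matrix a b ℝ} {F : ℝ → Matrix a b ℝ} {T : ℝ}

lemma solvesODE.continuousOn_apply (hF : solvesODE L F T) (i : a) (j : b) :
    ContinuousOn (fun t => F t i j) (Icc 0 T) :=
  fun t ht => (hF t ht i j).continuousAt.continuousWithinAt

lemma solvesODE.hasDerivAt_dotProduct_mulVec [Fintype a] [Fintype b] (hF : solvesODE L F T)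
    {t : ℝ} (ht : t ∈ Icc 0 T) (x : a → ℝ) (y : b → ℝ) :
    HasDerivAt (fun s => x ⬝ᵥ F s *ᵥ y) (x ⬝ᵥ L (F t) *ᵥ y) t := by
  simp only [dotProduct, mulVec, Finset.mul_sum]
  exact HasDerivAt.fun_sum fun i _ => HasDerivAt.fun_sum fun j _ =>
    ((hF t ht i j).mul_const (y j)).const_mul (x i)

lemma solvesODE.continuousOn_dotProduct_mulVec_self [Fintype a] {Z : ℝ → Matrix a a ℝ}
    {L : Matrix a a ℝ → Matrix a a ℝ} (hZ : solvesODE L Z T) (s : Set (a → ℝ)) :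
    ContinuousOn (fun p : ℝ × (a → ℝ) => p.2 ⬝ᵥ Z p.1 *ᵥ p.2) (Icc 0 T ×ˢ s) := by
  simp only [dotProduct, mulVec]
  refine continuousOn_finsetSum _ fun i _ => ContinuousOn.mul (by fun_prop) <|
    continuousOn_finsetSum _ fun j _ => ContinuousOn.mul ?_ (by fun_prop)
  exact (hZ.continuousOn_apply i j).comp continuousOn_fst fun p hp => hp.1

lemma solvesODE.intervalIntegrable_apply (hF : solvesODE L F T) (hT : 0 ≤ T) (i : a) (j : b) :
    IntervalIntegrable (fun t => F t i j) volume 0 T :=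
  (hF.continuousOn_apply i j).intervalIntegrable_of_Icc hT

lemma integral_dotProduct_mulVec [Fintype a] [Fintype b]
    (hF : ∀ i j, IntervalIntegrable (fun t => F t i j) volume 0 T) (u : a → ℝ) (w : b → ℝ) :
    ∫ t in 0..T, u ⬝ᵥ F t *ᵥ w = u ⬝ᵥ intM F T *ᵥ w := by
  simp only [dotProduct, mulVec, intM, of_apply, Finset.mul_sum]
  rw [integral_finsetSum fun i _ => by
    simpa only [Finset.sum_fn] using IntervalIntegrable.sum Finset.univ fun j _ =>
      ((hF i j).mul_const (w j)).const_mul (u i)]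
  refine Finset.sum_congr rfl fun i _ => ?_
  rw [integral_finsetSum fun j _ => ((hF i j).mul_const _).const_mul _]
  simp only [intervalIntegral.integral_const_mul, intervalIntegral.integral_mul_const]

lemma vecMul_intM [Fintype a] (hF : ∀ i j, IntervalIntegrable (fun t => F t i j) volume 0 T)
    (v : a → ℝ) : v ᵥ* intM F T = fun j => ∫ t in 0..T, (v ᵥ* F t) j := by
  ext j
  simp only [vecMul, dotProduct, intM, of_apply]
  rw [integral_finsetSum fun i _ => (hF i j).const_mul (v i)]
  simp only [intervalIntegral.integral_const_mul]

lemma vecMul_intM_eq_zero [Fintype a]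
    (hF : solvesODE L F T) (hT : 0 ≤ T) {v : a → ℝ} (hv : ∀ t ∈ Icc 0 T, v ᵥ* F t = 0) :
    v ᵥ* intM F T = 0 := by
  rw [vecMul_intM (hF.intervalIntegrable_apply hT)]
  ext j
  rw [integral_congr fun t ht => congrFun (hv t (uIcc_of_le hT ▸ ht)) j]
  simp

lemma eqOn_zero_of_integral_eq_zero {g : ℝ → ℝ} (hT : 0 < T) (hg : ContinuousOn g (Icc 0 T))
    (hg0 : ∀ t ∈ Icc 0 T, 0 ≤ g t) (hint : ∫ t in 0..T, g t = 0) : ∀ t ∈ Icc 0 T, g t = 0 := by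
  by_contra! ⟨t, ht, hgt⟩
  have := integral_lt_integral_of_continuousOn_of_le_of_exists_lt hT continuousOn_const hg
    (fun s hs => hg0 s (Ioc_subset_Icc_self hs)) ⟨t, ht, (hg0 t ht).lt_of_ne' hgt⟩
  simp [hint] at this

end ODE

section Invariance

variable {ι : Type*} [Fintype ι] [DecidableEq ι] {q : ℕ}

lemma exists_first_nonpos {E : Type*} [TopologicalSpace E] [T2Space E] {S : Set E}
    (hS : IsCompact S) {T : ℝ} {f : ℝ × E → ℝ} (hf : ContinuousOn f (Icc 0 T ×ˢ S))
    {p₁ : ℝ × E} (hp₁ : p₁ ∈ Icc 0 T ×ˢ S) (hf₁ : f p₁ ≤ 0) :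
    ∃ t₀ ∈ Icc 0 T, ∃ x₀ ∈ S, f (t₀, x₀) ≤ 0 ∧ ∀ t ∈ Ico 0 t₀, ∀ x ∈ S, 0 < f (t, x) := by
  have hcpt : IsCompact (Icc 0 T ×ˢ S ∩ f ⁻¹' Iic 0) :=
    (isCompact_Icc.prod hS).of_isClosed_subset
      (hf.preimage_isClosed_of_isClosed (isClosed_Icc.prod hS.isClosed) isClosed_Iic)
      inter_subset_left
  obtain ⟨⟨t₀, x₀⟩, ⟨⟨ht₀, hx₀⟩, hf₀⟩, hmin⟩ :=
    hcpt.exists_isMinOn ⟨p₁, hp₁, hf₁⟩ continuousOn_fst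
  refine ⟨t₀, ht₀, x₀, hx₀, hf₀, fun t ht x hx => ?_⟩
  by_contra! hle
  exact ht.2.not_ge (hmin ⟨⟨⟨ht.1, ht.2.le.trans ht₀.2⟩, hx⟩, hle⟩)

lemma HasDerivAt.nonpos_of_eq_zero_of_pos_left {g : ℝ → ℝ} {d t₀ a : ℝ}
    (hg : HasDerivAt g d t₀) (hg₀ : g t₀ = 0) (ha : a < t₀) (hpos : ∀ s ∈ Ioo a t₀, 0 < g s) :
    d ≤ 0 := by
  by_contra! hd
  obtain ⟨s, hsign, hs⟩ := (((eventually_nhdsWithin_sign_eq_of_deriv_pos (hg.deriv ▸ hd)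
    hg₀).filter_mono nhdsWithin_le_nhds).and (Ioo_mem_nhdsLT ha)).exists
  rw [sign_pos (hpos s hs), sign_neg (sub_neg.2 hs.2)] at hsign
  exact absurd hsign (by decide)

/- Barrier argument. At the first time `t₀` at which `M = Z t₀ + δ • 1`, `δ = ε e^{(C+1) t₀}`,
becomes singular, say `M *ᵥ x₀ = 0` with `x₀ ⬝ᵥ x₀ = 1`, the `A`-terms of `lyapM M` vanish on `x₀`,
the `N`-terms are nonnegative, and the rate `C + 1` beats `δ • lyapM 1 ≤ δ C`: the quadratic form in
`x₀` has positive derivative at `t₀`, although it decreases to `0` there. -/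
lemma dotProduct_mulVec_add_exp_pos_of_solvesODE_lyapM (A : Matrix ι ι ℝ)
    (N : Fin q → Matrix ι ι ℝ) {K : Matrix (Fin q) (Fin q) ℝ} (hK : K.PosSemidef) {T : ℝ}
    {Z : ℝ → Matrix ι ι ℝ} (hZ : solvesODE (lyapM A A N N K) Z T)
    (hsymm : ∀ t, (Z t).IsHermitian) (h0 : (Z 0).PosSemidef) {C : ℝ}
    (hC : ∀ x : ι → ℝ, x ⬝ᵥ x = 1 → x ⬝ᵥ lyapM A A N N K 1 *ᵥ x ≤ C) {ε : ℝ} (hε : 0 < ε) :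
    ∀ t ∈ Icc 0 T, ∀ x : ι → ℝ, x ⬝ᵥ x = 1 →
      0 < x ⬝ᵥ Z t *ᵥ x + ε * Real.exp ((C + 1) * t) := by
  set S := {x : ι → ℝ | x ⬝ᵥ x = 1}
  set f : ℝ × (ι → ℝ) → ℝ := fun p => p.2 ⬝ᵥ Z p.1 *ᵥ p.2 + ε * Real.exp ((C + 1) * p.1)
  by_contra! ⟨t₁, ht₁, x₁, hx₁, hf₁⟩
  obtain ⟨t₀, ht₀, x₀, hx₀, hf₀, hbefore⟩ := exists_first_nonpos (f := f)
    isCompact_dotProduct_self_eq_one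
    ((hZ.continuousOn_dotProduct_mulVec_self S).add (Continuous.continuousOn (by fun_prop)))
    (p₁ := (t₁, x₁)) ⟨ht₁, hx₁⟩ hf₁
  have hderiv (x : ι → ℝ) : HasDerivAt (fun s => f (s, x))
      (x ⬝ᵥ lyapM A A N N K (Z t₀) *ᵥ x + ε * (Real.exp ((C + 1) * t₀) * (C + 1))) t₀ :=
    (hZ.hasDerivAt_dotProduct_mulVec ht₀ x x).add
      (((hasDerivAt_id t₀).const_mul (C + 1)).exp.const_mul ε |>.congr_deriv (by simp))
  have ht₀pos : 0 < t₀ := by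
    refine ht₀.1.lt_of_ne fun h => hf₀.not_gt ?_
    have := h0.dotProduct_mulVec_nonneg x₀
    simp only [f, ← h, star_trivial, mul_zero, Real.exp_zero, mul_one] at this ⊢
    linarith
  set δ := ε * Real.exp ((C + 1) * t₀)
  set M := Z t₀ + δ • (1 : Matrix ι ι ℝ)
  have hfM : ∀ x ∈ S, x ⬝ᵥ M *ᵥ x = f (t₀, x) := fun x (hx : x ⬝ᵥ x = 1) => by
    simp [M, f, δ, add_mulVec, smul_mulVec, hx]
  have hM : M.PosSemidef := by
    refine posSemidef_of_dotProduct_mulVec_nonneg_of_unit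
      ((hsymm t₀).add (isHermitian_one.smul (IsSelfAdjoint.all δ))) fun x hx => ?_
    rw [hfM x hx]
    refine ge_of_tendsto
      ((hderiv x).continuousAt.tendsto.mono_left (nhdsWithin_le_nhds (s := Iio t₀))) ?_
    filter_upwards [Ioo_mem_nhdsLT ht₀pos] with s hs using (hbefore s ⟨hs.1.le, hs.2⟩ x hx).le
  have hf₀' : f (t₀, x₀) = 0 :=
    hf₀.antisymm (by simpa [hfM x₀ hx₀] using hM.dotProduct_mulVec_nonneg x₀)
  have hMx : M *ᵥ x₀ = 0 :=
    (hM.dotProduct_mulVec_zero_iff x₀).1 (by rw [star_trivial, hfM x₀ hx₀, hf₀'])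
  refine ((hderiv x₀).nonpos_of_eq_zero_of_pos_left hf₀' ht₀pos
    fun s hs => hbefore s ⟨hs.1.le, hs.2⟩ x₀ hx₀).not_gt ?_
  have hL := dotProduct_lyapM_mulVec_nonneg A N hK hM hMx
  have hLC := mul_le_mul_of_nonneg_left (hC x₀ hx₀) (by positivity : 0 ≤ δ)
  rw [show Z t₀ = M - δ • 1 by simp [M], ← lyapLinearMap_apply, map_sub, map_smul, sub_mulVec,
    smul_mulVec, dotProduct_sub, dotProduct_smul, lyapLinearMap_apply, lyapLinearMap_apply,
    smul_eq_mul]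
  nlinarith [show 0 < δ by positivity]

theorem posSemidef_of_solvesODE_lyapM (A : Matrix ι ι ℝ) (N : Fin q → Matrix ι ι ℝ)
    {K : Matrix (Fin q) (Fin q) ℝ} (hK : K.PosSemidef) {T : ℝ} {Z : ℝ → Matrix ι ι ℝ}
    (hZ : solvesODE (lyapM A A N N K) Z T) (hsymm : ∀ t, (Z t).IsHermitian)
    (h0 : (Z 0).PosSemidef) {t : ℝ} (ht : t ∈ Icc 0 T) : (Z t).PosSemidef := by
  obtain ⟨C, hC⟩ := isCompact_dotProduct_self_eq_one.bddAbove_image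
    (f := fun x : ι → ℝ => x ⬝ᵥ lyapM A A N N K 1 *ᵥ x) (by fun_prop)
  refine posSemidef_of_dotProduct_mulVec_nonneg_of_unit (hsymm t) fun x hx =>
    le_of_forall_pos_lt_add fun ε hε => ?_
  have := dotProduct_mulVec_add_exp_pos_of_solvesODE_lyapM A N hK hZ hsymm h0
    (fun x hx => hC ⟨x, hx, rfl⟩) (div_pos hε (Real.exp_pos ((C + 1) * t))) t ht x hx
  rwa [div_mul_cancel₀ _ (Real.exp_ne_zero _)] at this

end Invariance

section Blocks

variable {a b : Type*} [Fintype a] [Fintype b] {q : ℕ} {T : ℝ}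

lemma solvesODE.add_transpose {A : Matrix a a ℝ} {N : Fin q → Matrix a a ℝ}
    {K : Matrix (Fin q) (Fin q) ℝ} (hK : Kᵀ = K) {Z : ℝ → Matrix a a ℝ}
    (hZ : solvesODE (lyapM A A N N K) Z T) :
    solvesODE (lyapM A A N N K) (fun t => Z t + (Z t)ᵀ) T := by
  intro t ht i j
  have hL : lyapM A A N N K (Z t + (Z t)ᵀ) = lyapM A A N N K (Z t) + (lyapM A A N N K (Z t))ᵀ := by
    rw [← lyapLinearMap_apply, map_add, lyapLinearMap_apply, lyapLinearMap_apply,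
      lyapM_transpose, hK]
  rw [hL]
  exact (hZ t ht i j).add (hZ t ht j i)

lemma solvesODE_fromBlocks {A : Matrix a a ℝ} {Ah : Matrix b b ℝ} {N : Fin q → Matrix a a ℝ}
    {Nh : Fin q → Matrix b b ℝ} {K : Matrix (Fin q) (Fin q) ℝ} (hK : Kᵀ = K)
    {F : ℝ → Matrix a a ℝ} {Ft : ℝ → Matrix a b ℝ} {Fh : ℝ → Matrix b b ℝ}
    (hF : solvesODE (lyapM A A N N K) F T) (hFt : solvesODE (lyapM A Ah N Nh K) Ft T)
    (hFh : solvesODE (lyapM Ah Ah Nh Nh K) Fh T) :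
    solvesODE (lyapM (fromBlocks A 0 0 Ah) (fromBlocks A 0 0 Ah)
      (fun i => fromBlocks (N i) 0 0 (Nh i)) (fun i => fromBlocks (N i) 0 0 (Nh i)) K)
      (fun t => fromBlocks (F t) (Ft t) (Ft t)ᵀ (Fh t)) T := by
  intro t ht i j
  rw [lyapM_fromBlocks]
  rcases i with i | i <;> rcases j with j | j
  · exact hF t ht i j
  · exact hFt t ht i j
  · rw [fromBlocks_apply₂₁, ← hK, ← lyapM_transpose]
    exact hFt t ht j i
  · exact hFh t ht i j

lemma fromBlocks_add_transpose_mulVec_inl (P : Matrix a a ℝ) (Q : Matrix a b ℝ)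
    (R : Matrix b b ℝ) (v : a → ℝ) :
    (fromBlocks P Q Qᵀ R + (fromBlocks P Q Qᵀ R)ᵀ) *ᵥ Sum.elim v 0 =
      Sum.elim ((P + Pᵀ) *ᵥ v) (2 • (v ᵥ* Q)) := by
  rw [fromBlocks_transpose, transpose_transpose, fromBlocks_add, fromBlocks_mulVec]
  simp [two_smul, vecMul_add, ← vecMul_transpose]

end Blocks

section Mixed

variable {a b c : Type*} [Fintype a] [Fintype b] [Fintype c] [DecidableEq a] [DecidableEq b]
  {q : ℕ} {T : ℝ}

lemma posSemidef_fromBlocks_add_transpose {A : Matrix a a ℝ} {Ah : Matrix b b ℝ}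
    {N : Fin q → Matrix a a ℝ} {Nh : Fin q → Matrix b b ℝ} {K : Matrix (Fin q) (Fin q) ℝ}
    (hK : K.PosSemidef) {X₀ : Matrix a c ℝ} {Xh₀ : Matrix b c ℝ}
    {F : ℝ → Matrix a a ℝ} (hF : solvesODE (lyapM A A N N K) F T) (hF0 : F 0 = X₀ * X₀ᵀ)
    {Ft : ℝ → Matrix a b ℝ} (hFt : solvesODE (lyapM A Ah N Nh K) Ft T)
    (hFt0 : Ft 0 = X₀ * Xh₀ᵀ) {Fh : ℝ → Matrix b b ℝ}
    (hFh : solvesODE (lyapM Ah Ah Nh Nh K) Fh T) (hFh0 : Fh 0 = Xh₀ * Xh₀ᵀ) {t : ℝ}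
    (ht : t ∈ Icc 0 T) :
    (fromBlocks (F t) (Ft t) (Ft t)ᵀ (Fh t) +
      (fromBlocks (F t) (Ft t) (Ft t)ᵀ (Fh t))ᵀ).PosSemidef := by
  have hKt : Kᵀ = K := by rw [← conjTranspose_eq_transpose_of_trivial]; exact hK.1
  set Z := fun s => fromBlocks (F s) (Ft s) (Ft s)ᵀ (Fh s)
  -- `F t` is not known to be symmetric, so positivity is propagated for `Z + Zᵀ`.
  refine posSemidef_of_solvesODE_lyapM _ _ hK
    ((solvesODE_fromBlocks hKt hF hFt hFh).add_transpose hKt) (fun s => ?_) ?_ ht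
  · simpa [conjTranspose_eq_transpose_of_trivial] using isHermitian_add_transpose_self (Z s)
  · have hZ0 : Z 0 = fromRows X₀ Xh₀ * (fromRows X₀ Xh₀)ᴴ := by
      simp [Z, conjTranspose_eq_transpose_of_trivial, transpose_fromRows, hF0, hFt0, hFh0]
    have hB := posSemidef_self_mul_conjTranspose (fromRows X₀ Xh₀)
    change (Z 0 + (Z 0)ᵀ).PosSemidef
    rw [hZ0, ← conjTranspose_eq_transpose_of_trivial, conjTranspose_mul,
      conjTranspose_conjTranspose]
    exact hB.add hB

theorem vecMul_eq_zero_of_vecMul_intM_eq_zero (hT : 0 < T) {A : Matrix a a ℝ}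
    {Ah : Matrix b b ℝ} {N : Fin q → Matrix a a ℝ} {Nh : Fin q → Matrix b b ℝ}
    {K : Matrix (Fin q) (Fin q) ℝ} (hK : K.PosSemidef) {X₀ : Matrix a c ℝ} {Xh₀ : Matrix b c ℝ}
    {F : ℝ → Matrix a a ℝ} (hF : solvesODE (lyapM A A N N K) F T) (hF0 : F 0 = X₀ * X₀ᵀ)
    {Ft : ℝ → Matrix a b ℝ} (hFt : solvesODE (lyapM A Ah N Nh K) Ft T)
    (hFt0 : Ft 0 = X₀ * Xh₀ᵀ) {v : a → ℝ} (hv : v ᵥ* intM F T = 0) {t : ℝ}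
    (ht : t ∈ Icc 0 T) : v ᵥ* Ft t = 0 := by
  obtain ⟨Fh, hFh0, hFh⟩ := exists_solvesODE_lyapM Ah Ah Nh Nh K (Xh₀ * Xh₀ᵀ) T
  have hpsd := fun s (hs : s ∈ Icc 0 T) =>
    posSemidef_fromBlocks_add_transpose hK hF hF0 hFt hFt0 hFh hFh0 hs
  have hquad (s : ℝ) : Sum.elim v 0 ⬝ᵥ (fromBlocks (F s) (Ft s) (Ft s)ᵀ (Fh s) +
      (fromBlocks (F s) (Ft s) (Ft s)ᵀ (Fh s))ᵀ) *ᵥ Sum.elim v 0 = 2 * (v ⬝ᵥ F s *ᵥ v) := by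
    rw [fromBlocks_add_transpose_mulVec_inl]
    simp only [sumElim_dotProduct_sumElim, zero_dotProduct, add_zero]
    rw [add_mulVec, dotProduct_add, mulVec_transpose, dotProduct_comm v (v ᵥ* F s),
      ← dotProduct_mulVec, two_mul]
  have hint : ∫ s in 0..T, v ⬝ᵥ F s *ᵥ v = 0 := by
    rw [integral_dotProduct_mulVec (hF.intervalIntegrable_apply hT.le), dotProduct_mulVec, hv,
      zero_dotProduct]
  have hzero := eqOn_zero_of_integral_eq_zero hT
    (fun s hs => (hF.hasDerivAt_dotProduct_mulVec hs v v).continuousAt.continuousWithinAt)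
    (fun s hs => by
      have := (hpsd s hs).dotProduct_mulVec_nonneg (Sum.elim v 0)
      rw [star_trivial, hquad] at this
      linarith) hint
  have hmul := ((hpsd t ht).dotProduct_mulVec_zero_iff _).1
    (by rw [star_trivial, hquad, hzero t ht, mul_zero])
  rw [fromBlocks_add_transpose_mulVec_inl] at hmul
  ext j
  simpa using congrFun hmul (Sum.inr j)

end Mixed

section Decomposition

lemma tailEmb_injective {n nh : ℕ} (hn : nh ≤ n) : Function.Injective (tailEmb hn) :=
  fun i j h => Fin.ext (by simpa [tailEmb] using congrArg Fin.val h)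

lemma Fin.sum_eq_sum_castLE_add_sum_tailEmb {M : Type*} [AddCommMonoid M] {n nh : ℕ}
    (hn : nh ≤ n) (f : Fin n → M) :
    ∑ k, f k = ∑ i : Fin nh, f (Fin.castLE hn i) + ∑ j : Fin (n - nh), f (tailEmb hn j) := by
  rw [← (finCongr (Nat.add_sub_cancel' hn)).sum_comp, Fin.sum_univ_add]
  congr 1
  exact Finset.sum_congr rfl fun i _ => congrArg f (Fin.ext (by simp [tailEmb, add_comm]))

lemma mul_eq_castLE_mul_add_tailEmb_mul {m c : Type*} {n nh : ℕ} (hn : nh ≤ n)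
    (P : Matrix m (Fin n) ℝ) (Y : Matrix (Fin n) c ℝ) :
    P * Y = P.submatrix id (Fin.castLE hn) * Y.submatrix (Fin.castLE hn) id +
      P.submatrix id (tailEmb hn) * Y.submatrix (tailEmb hn) id := by
  ext i k
  simp [mul_apply, Fin.sum_eq_sum_castLE_add_sum_tailEmb hn]

lemma Matrix.IsDiag.exists_mul_eq {ι c : Type*} [Fintype ι] {D : Matrix ι ι ℝ} (hD : D.IsDiag)
    {Y : Matrix ι c ℝ} (hY : ∀ j, D j j = 0 → Y j = 0) : ∃ M : Matrix ι c ℝ, Y = D * M := by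
  -- where `D j j = 0` the quotient is the junk value `0`, matching `Y j = 0`
  refine ⟨of fun j k => Y j k / D j j, ?_⟩
  ext j k
  simp only [mul_apply, of_apply]
  rw [Finset.sum_eq_single j (fun l _ hl => by rw [hD (Ne.symm hl), zero_mul])
    (by simp)]
  by_cases hj : D j j = 0
  · simp [hj, hY j hj]
  · simp [mul_div_cancel₀ _ hj]

lemma Matrix.IsDiag.mul_apply_eq_zero {ι c : Type*} [Fintype ι] {D : Matrix ι ι ℝ}
    (hD : D.IsDiag) {j : ι} (hj : D j j = 0) (B : Matrix ι c ℝ) : (D * B) j = 0 := by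
  funext k
  refine mul_apply.trans (Finset.sum_eq_zero fun l _ => ?_)
  rcases eq_or_ne j l with rfl | hl
  · rw [hj, zero_mul]
  · rw [hD hl, zero_mul]

lemma exists_eq_castLE_mul_add_tailEmb_diag_mul {c : Type*} [Fintype c] {n nh : ℕ}
    (hn : nh ≤ n) {TP SP : Matrix (Fin n) (Fin n) ℝ} (hTP : IsUnit TP) (hSP : SP.IsDiag)
    {X : Matrix (Fin n) c ℝ}
    (hX : ∀ j, SP (tailEmb hn j) (tailEmb hn j) = 0 → TP⁻¹ (tailEmb hn j) ᵥ* X = 0) :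
    ∃ (M : Matrix (Fin nh) c ℝ) (M₂ : Matrix (Fin (n - nh)) c ℝ),
      X = TP.submatrix id (Fin.castLE hn) * M +
        TP.submatrix id (tailEmb hn) * SP.submatrix (tailEmb hn) (tailEmb hn) * M₂ := by
  obtain ⟨M₂, hM₂⟩ := (hSP.submatrix (tailEmb_injective hn)).exists_mul_eq
    (Y := (TP⁻¹ * X).submatrix (tailEmb hn) id) fun j hj =>
      (mul_apply_eq_vecMul _ _ _).trans (hX j hj)
  refine ⟨(TP⁻¹ * X).submatrix (Fin.castLE hn) id, M₂, ?_⟩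
  rw [Matrix.mul_assoc, ← hM₂, ← mul_eq_castLE_mul_add_tailEmb_mul,
    mul_nonsing_inv_cancel_left _ _ ((isUnit_iff_isUnit_det TP).1 hTP)]

theorem exists_decomp_of_solvesODE_mixed {c : Type*} [Fintype c] {n nh q : ℕ} (hn : nh ≤ n)
    {T : ℝ} (hT : 0 < T) {A : Matrix (Fin n) (Fin n) ℝ} {N : Fin q → Matrix (Fin n) (Fin n) ℝ}
    {K : Matrix (Fin q) (Fin q) ℝ} (hK : K.PosSemidef) {Ah : Matrix (Fin nh) (Fin nh) ℝ}
    {Nh : Fin q → Matrix (Fin nh) (Fin nh) ℝ} {X₀ : Matrix (Fin n) c ℝ}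
    {Xh₀ : Matrix (Fin nh) c ℝ} {F : ℝ → Matrix (Fin n) (Fin n) ℝ}
    (hF : solvesODE (lyapM A A N N K) F T) (hF0 : F 0 = X₀ * X₀ᵀ)
    {Ft : ℝ → Matrix (Fin n) (Fin nh) ℝ} (hFt : solvesODE (lyapM A Ah N Nh K) Ft T)
    (hFt0 : Ft 0 = X₀ * Xh₀ᵀ) {TP SP : Matrix (Fin n) (Fin n) ℝ} (hTP : IsUnit TP)
    (hSP : SP.IsDiag) (hPdec : intM F T = TP * SP * TPᵀ) :
    (∀ t ∈ Icc 0 T, ∃ (M : Matrix (Fin nh) (Fin nh) ℝ) (M₂ : Matrix (Fin (n - nh)) (Fin nh) ℝ),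
        Ft t = TP.submatrix id (Fin.castLE hn) * M +
          TP.submatrix id (tailEmb hn) * SP.submatrix (tailEmb hn) (tailEmb hn) * M₂) ∧
    ∀ R : Matrix (Fin nh) (Fin nh) ℝ,
      ∃ (M : Matrix (Fin nh) (Fin nh) ℝ) (M₂ : Matrix (Fin (n - nh)) (Fin nh) ℝ),
        intM Ft T * R = TP.submatrix id (Fin.castLE hn) * M +
          TP.submatrix id (tailEmb hn) * SP.submatrix (tailEmb hn) (tailEmb hn) * M₂ := by
  have hrow : ∀ j, SP (tailEmb hn j) (tailEmb hn j) = 0 →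
      ∀ t ∈ Icc 0 T, TP⁻¹ (tailEmb hn j) ᵥ* Ft t = 0 := by
    refine fun j hj t ht => vecMul_eq_zero_of_vecMul_intM_eq_zero hT hK hF hF0 hFt hFt0 ?_ ht
    rw [← mul_apply_eq_vecMul, hPdec, Matrix.mul_assoc,
      nonsing_inv_mul_cancel_left _ _ ((isUnit_iff_isUnit_det TP).1 hTP)]
    exact hSP.mul_apply_eq_zero hj _
  refine ⟨fun t ht => exists_eq_castLE_mul_add_tailEmb_diag_mul hn hTP hSP
    fun j hj => hrow j hj t ht, fun R => exists_eq_castLE_mul_add_tailEmb_diag_mul hn hTP hSP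
    fun j hj => ?_⟩
  rw [← vecMul_vecMul, vecMul_intM_eq_zero hFt hT.le (hrow j hj), zero_vecMul]

end Decomposition

/-- Theorem 3.5: given diagonalizations `P(T) = 𝒯_P Σ_P 𝒯_Pᵀ`,
`Q(T) = 𝒯_Q Σ_Q 𝒯_Qᵀ` and projection matrices `V = P̃(T) R_V`, `W = Q̃(T) R_W`
(a converged Sylvester fixed point), `F̃(t)`, `V` decompose along the leading columns
`V_P` of `𝒯_P` up to terms weighted by the truncated diagonal block `Σ_{P,2}`, and
similarly `G̃(t)`, `W` along the leading columns `W_Q` of `𝒯_Q`. -/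
theorem stmt_11 {n nh m p q : ℕ} (hn : nh ≤ n) (T : ℝ) (hT : 0 < T)
    (A : Matrix (Fin n) (Fin n) ℝ) (N : Fin q → Matrix (Fin n) (Fin n) ℝ)
    (K : Matrix (Fin q) (Fin q) ℝ) (hK : K.PosSemidef)
    (X₀ : Matrix (Fin n) (Fin m) ℝ) (C : Matrix (Fin p) (Fin n) ℝ)
    (Ahat : Matrix (Fin nh) (Fin nh) ℝ) (Nhat : Fin q → Matrix (Fin nh) (Fin nh) ℝ)
    (X0hat : Matrix (Fin nh) (Fin m) ℝ) (Chat : Matrix (Fin p) (Fin nh) ℝ)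
    (F : ℝ → Matrix (Fin n) (Fin n) ℝ)
    (hF : solvesODE (lyapM A A N N K) F T) (hF0 : F 0 = X₀ * X₀ᵀ)
    (G : ℝ → Matrix (Fin n) (Fin n) ℝ)
    (hG : solvesODE (lyapAdjM A A N N K) G T) (hG0 : G 0 = Cᵀ * C)
    (Ftil : ℝ → Matrix (Fin n) (Fin nh) ℝ)
    (hFtil : solvesODE (lyapM A Ahat N Nhat K) Ftil T)
    (hFtil0 : Ftil 0 = X₀ * X0hatᵀ)
    (Gtil : ℝ → Matrix (Fin n) (Fin nh) ℝ)
    (hGtil : solvesODE (lyapAdjM A Ahat N Nhat K) Gtil T)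
    (hGtil0 : Gtil 0 = Cᵀ * Chat)
    (TP TQ SP SQ : Matrix (Fin n) (Fin n) ℝ)
    (hTP : IsUnit TP) (hTQ : IsUnit TQ) (hSP : SP.IsDiag) (hSQ : SQ.IsDiag)
    (hPdec : intM F T = TP * SP * TPᵀ) (hQdec : intM G T = TQ * SQ * TQᵀ)
    (V W : Matrix (Fin n) (Fin nh) ℝ) (RV RW : Matrix (Fin nh) (Fin nh) ℝ)
    (hV : V = intM Ftil T * RV) (hW : W = intM Gtil T * RW) :
    (∀ t ∈ Set.Icc (0:ℝ) T,
      ∃ (MF : Matrix (Fin nh) (Fin nh) ℝ) (MF2 : Matrix (Fin (n - nh)) (Fin nh) ℝ),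
        Ftil t = TP.submatrix id (Fin.castLE hn) * MF +
          TP.submatrix id (tailEmb hn) * SP.submatrix (tailEmb hn) (tailEmb hn) * MF2)
    ∧ (∃ (MP : Matrix (Fin nh) (Fin nh) ℝ) (MP2 : Matrix (Fin (n - nh)) (Fin nh) ℝ),
        V = TP.submatrix id (Fin.castLE hn) * MP +
          TP.submatrix id (tailEmb hn) * SP.submatrix (tailEmb hn) (tailEmb hn) * MP2)
    ∧ (∀ t ∈ Set.Icc (0:ℝ) T,
      ∃ (MG : Matrix (Fin nh) (Fin nh) ℝ) (MG2 : Matrix (Fin (n - nh)) (Fin nh) ℝ),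
        Gtil t = TQ.submatrix id (Fin.castLE hn) * MG +
          TQ.submatrix id (tailEmb hn) * SQ.submatrix (tailEmb hn) (tailEmb hn) * MG2)
    ∧ (∃ (MQ : Matrix (Fin nh) (Fin nh) ℝ) (MQ2 : Matrix (Fin (n - nh)) (Fin nh) ℝ),
        W = TQ.submatrix id (Fin.castLE hn) * MQ +
          TQ.submatrix id (tailEmb hn) * SQ.submatrix (tailEmb hn) (tailEmb hn) * MQ2) := by
  obtain ⟨hFtilDec, hVDec⟩ :=
    exists_decomp_of_solvesODE_mixed hn hT hK hF hF0 hFtil hFtil0 hTP hSP hPdec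
  rw [lyapAdjM_eq_lyapM_transpose] at hG hGtil
  obtain ⟨hGtilDec, hWDec⟩ := exists_decomp_of_solvesODE_mixed hn hT hK hG
    (by rw [hG0, transpose_transpose]) hGtil (by rw [hGtil0, transpose_transpose]) hTQ hSQ hQdec
  exact ⟨hFtilDec, hV ▸ hVDec RV, hGtilDec, hW ▸ hWDec RW⟩
end
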